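/- (Claim 3) For any integers p and i with 2 ≤ p ≤ i ≤ n, the function f_{p,i}(t) = max{ OPT(p−1, 1, t), OPT(1, t+1, i) } defined for integers 1 ≤ t ≤ i−1 is unimodal in t; equivalently, it is quasiconvex: for all integers 1 ≤ t_1 ≤ t_2 ≤ t_3 ≤ i−1, f_{p,i}(t_2) ≤ max{ f_{p,i}(t_1), f_{p,i}(t_3) }. -/
import Mathlib


open Finset

/-- Left evacuation time `L_i(x)`. -/
noncomputable def evacL (v w : ℕ → ℝ) (c τ : ℝ) (n i : ℕ) (x : ℝ) : ℝ :=
  ((Finset.Icc i n).filter (fun l => v l < x)).fold max 0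
    (fun l => τ * (x - v l) + (∑ h ∈ Finset.Icc i l, w h) / c)

/-- Right evacuation time `R_j(x)`. -/
noncomputable def evacR (v w : ℕ → ℝ) (c τ : ℝ) (n j : ℕ) (x : ℝ) : ℝ :=
  ((Finset.Icc 1 j).filter (fun l => x < v l)).fold max 0
    (fun l => τ * (v l - x) + (∑ h ∈ Finset.Icc l j, w h) / c)

/-- 1-sink evacuation cost `Θ_{i,j}(x)`. -/
noncomputable def theta (v w : ℕ → ℝ) (c τ : ℝ) (n i j : ℕ) (x : ℝ) : ℝ :=
  max (evacL v w c τ n i x) (evacR v w c τ n j x)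

/-- `OPT(1,i,j)`. -/
noncomputable def OPT1 (v w : ℕ → ℝ) (c τ : ℝ) (n i j : ℕ) : ℝ :=
  sInf (theta v w c τ n i j '' Set.Icc (v i) (v j))

/-- `OPT(p,i,j)` for general `p`. -/
noncomputable def OPTk (v w : ℕ → ℝ) (c τ : ℝ) (n p i j : ℕ) : ℝ :=
  if p = 1 then OPT1 v w c τ n i j
  else sInf { m : ℝ | ∃ t : ℕ → ℕ, t 0 = i - 1 ∧ t p = j ∧ StrictMonoOn t (Set.Icc 0 p) ∧
        m = (Finset.Icc 1 p).fold max 0 (fun q => OPT1 v w c τ n (t (q - 1) + 1) (t q)) }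

section Aux

variable {v w : ℕ → ℝ} {c τ : ℝ} {n : ℕ}

private lemma fold_max_nonneg {α : Type*} (s : Finset α) (f : α → ℝ) :
    (0:ℝ) ≤ s.fold max 0 f := (Finset.le_fold_max 0).2 (Or.inl le_rfl)

private lemma evacL_nonneg (i : ℕ) (x : ℝ) : 0 ≤ evacL v w c τ n i x :=
  fold_max_nonneg _ _

private lemma evacR_nonneg (j : ℕ) (x : ℝ) : 0 ≤ evacR v w c τ n j x :=
  fold_max_nonneg _ _

private lemma theta_nonneg (i j : ℕ) (x : ℝ) : 0 ≤ theta v w c τ n i j x :=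
  le_trans (evacL_nonneg i x) (le_max_left _ _)

private lemma evacL_mono_x (hτ : 0 ≤ τ) (i : ℕ) {x y : ℝ} (hxy : x ≤ y) :
    evacL v w c τ n i x ≤ evacL v w c τ n i y := by
  unfold evacL
  rw [Finset.fold_max_le]
  refine ⟨fold_max_nonneg _ _, fun l hl => ?_⟩
  simp only [Finset.mem_filter] at hl
  refine (Finset.le_fold_max _).2 (Or.inr ⟨l, ?_, ?_⟩)
  · simp only [Finset.mem_filter]; exact ⟨hl.1, lt_of_lt_of_le hl.2 hxy⟩
  · have : τ * (x - v l) ≤ τ * (y - v l) := by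
      apply mul_le_mul_of_nonneg_left _ hτ; linarith
    linarith

private lemma evacR_anti_x (hτ : 0 ≤ τ) (j : ℕ) {x y : ℝ} (hxy : x ≤ y) :
    evacR v w c τ n j y ≤ evacR v w c τ n j x := by
  unfold evacR
  rw [Finset.fold_max_le]
  refine ⟨fold_max_nonneg _ _, fun l hl => ?_⟩
  simp only [Finset.mem_filter] at hl
  refine (Finset.le_fold_max _).2 (Or.inr ⟨l, ?_, ?_⟩)
  · simp only [Finset.mem_filter]; exact ⟨hl.1, lt_of_le_of_lt hxy hl.2⟩
  · have : τ * (v l - y) ≤ τ * (v l - x) := by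
      apply mul_le_mul_of_nonneg_left _ hτ; linarith
    linarith

private lemma evacL_anti_i (hw : ∀ h, 1 ≤ h → h ≤ n → 0 < w h) (hc : 0 < c)
    {a' a : ℕ} (h1 : 1 ≤ a') (ha : a' ≤ a) (x : ℝ) :
    evacL v w c τ n a x ≤ evacL v w c τ n a' x := by
  unfold evacL
  rw [Finset.fold_max_le]
  refine ⟨fold_max_nonneg _ _, fun l hl => ?_⟩
  simp only [Finset.mem_filter, Finset.mem_Icc] at hl
  refine (Finset.le_fold_max _).2 (Or.inr ⟨l, ?_, ?_⟩)
  · simp only [Finset.mem_filter, Finset.mem_Icc]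
    exact ⟨⟨le_trans ha hl.1.1, hl.1.2⟩, hl.2⟩
  · have hsum : (∑ h ∈ Finset.Icc a l, w h) ≤ ∑ h ∈ Finset.Icc a' l, w h := by
      apply Finset.sum_le_sum_of_subset_of_nonneg (Finset.Icc_subset_Icc_left ha)
      intro h hh _
      simp only [Finset.mem_Icc] at hh
      exact (hw h (le_trans h1 hh.1) (le_trans hh.2 hl.1.2)).le
    gcongr

private lemma evacR_mono_j (hw : ∀ h, 1 ≤ h → h ≤ n → 0 < w h) (hc : 0 < c)
    {b b' : ℕ} (hbb : b ≤ b') (hn : b' ≤ n) (x : ℝ) :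
    evacR v w c τ n b x ≤ evacR v w c τ n b' x := by
  unfold evacR
  rw [Finset.fold_max_le]
  refine ⟨fold_max_nonneg _ _, fun l hl => ?_⟩
  simp only [Finset.mem_filter, Finset.mem_Icc] at hl
  refine (Finset.le_fold_max _).2 (Or.inr ⟨l, ?_, ?_⟩)
  · simp only [Finset.mem_filter, Finset.mem_Icc]
    exact ⟨⟨hl.1.1, le_trans hl.1.2 hbb⟩, hl.2⟩
  · have hsum : (∑ h ∈ Finset.Icc l b, w h) ≤ ∑ h ∈ Finset.Icc l b', w h := by
      apply Finset.sum_le_sum_of_subset_of_nonneg (Finset.Icc_subset_Icc_right hbb)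
      intro h hh _
      simp only [Finset.mem_Icc] at hh
      exact (hw h (le_trans hl.1.1 hh.1) (le_trans hh.2 hn)).le
    gcongr

private lemma evacL_self (hv : StrictMonoOn v (Set.Icc 1 n)) {a : ℕ}
    (h1 : 1 ≤ a) (hn : a ≤ n) : evacL v w c τ n a (v a) = 0 := by
  unfold evacL
  have : ((Finset.Icc a n).filter (fun l => v l < v a)) = ∅ := by
    apply Finset.filter_eq_empty_iff.2
    intro l hl
    simp only [Finset.mem_Icc] at hl
    exact not_lt.2 (hv.monotoneOn ⟨h1, hn⟩ ⟨le_trans h1 hl.1, hl.2⟩ hl.1)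
  rw [this, Finset.fold_empty]

private lemma evacR_self (hv : StrictMonoOn v (Set.Icc 1 n)) {b : ℕ}
    (h1 : 1 ≤ b) (hn : b ≤ n) : evacR v w c τ n b (v b) = 0 := by
  unfold evacR
  have : ((Finset.Icc 1 b).filter (fun l => v b < v l)) = ∅ := by
    apply Finset.filter_eq_empty_iff.2
    intro l hl
    simp only [Finset.mem_Icc] at hl
    exact not_lt.2 (hv.monotoneOn ⟨hl.1, le_trans hl.2 hn⟩ ⟨h1, hn⟩ hl.2)
  rw [this, Finset.fold_empty]

private lemma opt1_nonneg (i j : ℕ) : 0 ≤ OPT1 v w c τ n i j := by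
  apply Real.sInf_nonneg
  rintro y ⟨x, _, rfl⟩
  exact theta_nonneg _ _ _

private lemma opt1_bddBelow (i j : ℕ) :
    BddBelow (theta v w c τ n i j '' Set.Icc (v i) (v j)) := by
  refine ⟨0, ?_⟩
  rintro y ⟨x, _, rfl⟩
  exact theta_nonneg _ _ _

private lemma opt1_self (hv : StrictMonoOn v (Set.Icc 1 n)) {a : ℕ}
    (h1 : 1 ≤ a) (hn : a ≤ n) : OPT1 v w c τ n a a = 0 := by
  unfold OPT1
  have h0 : theta v w c τ n a a (v a) = 0 := by
    unfold theta
    rw [evacL_self hv h1 hn, evacR_self hv h1 hn, max_self]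
  apply le_antisymm
  · calc sInf _ ≤ theta v w c τ n a a (v a) :=
          csInf_le (opt1_bddBelow a a) ⟨v a, ⟨le_rfl, le_rfl⟩, rfl⟩
      _ = 0 := h0
  · exact opt1_nonneg a a

private lemma opt1_mono_right (hv : StrictMonoOn v (Set.Icc 1 n))
    (hw : ∀ h, 1 ≤ h → h ≤ n → 0 < w h) (hc : 0 < c) (hτ : 0 < τ)
    {a b b' : ℕ} (h1 : 1 ≤ a) (hab : a ≤ b) (hbb : b ≤ b') (hn : b' ≤ n) :
    OPT1 v w c τ n a b ≤ OPT1 v w c τ n a b' := by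
  have hvab : v a ≤ v b :=
    hv.monotoneOn ⟨h1, le_trans (le_trans hab hbb) hn⟩ ⟨le_trans h1 hab, le_trans hbb hn⟩ hab
  have hvab' : v a ≤ v b' :=
    hv.monotoneOn ⟨h1, le_trans (le_trans hab hbb) hn⟩
      ⟨le_trans h1 (le_trans hab hbb), hn⟩ (le_trans hab hbb)
  unfold OPT1
  apply le_csInf ((Set.nonempty_Icc.2 hvab').image _)
  rintro y ⟨x, hx, rfl⟩
  by_cases hxb : x ≤ v b
  · calc sInf _ ≤ theta v w c τ n a b x :=
          csInf_le (opt1_bddBelow a b) ⟨x, ⟨hx.1, hxb⟩, rfl⟩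
      _ ≤ theta v w c τ n a b' x :=
          max_le_max le_rfl (evacR_mono_j hw hc hbb hn x)
  · push_neg at hxb
    calc sInf _ ≤ theta v w c τ n a b (v b) :=
          csInf_le (opt1_bddBelow a b) ⟨v b, ⟨hvab, le_rfl⟩, rfl⟩
      _ ≤ theta v w c τ n a b' x := by
          apply max_le
          · exact le_trans (evacL_mono_x hτ.le a hxb.le) (le_max_left _ _)
          · rw [evacR_self hv (le_trans h1 hab) (le_trans hbb hn)]
            exact theta_nonneg _ _ _

private lemma opt1_anti_left (hv : StrictMonoOn v (Set.Icc 1 n))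
    (hw : ∀ h, 1 ≤ h → h ≤ n → 0 < w h) (hc : 0 < c) (hτ : 0 < τ)
    {a' a b : ℕ} (h1 : 1 ≤ a') (ha : a' ≤ a) (hab : a ≤ b) (hn : b ≤ n) :
    OPT1 v w c τ n a b ≤ OPT1 v w c τ n a' b := by
  have hvab : v a ≤ v b :=
    hv.monotoneOn ⟨le_trans h1 ha, le_trans hab hn⟩ ⟨le_trans (le_trans h1 ha) hab, hn⟩ hab
  have hvab' : v a' ≤ v b :=
    hv.monotoneOn ⟨h1, le_trans (le_trans ha hab) hn⟩
      ⟨le_trans h1 (le_trans ha hab), hn⟩ (le_trans ha hab)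
  unfold OPT1
  apply le_csInf ((Set.nonempty_Icc.2 hvab').image _)
  rintro y ⟨x, hx, rfl⟩
  by_cases hxa : v a ≤ x
  · calc sInf _ ≤ theta v w c τ n a b x :=
          csInf_le (opt1_bddBelow a b) ⟨x, ⟨hxa, hx.2⟩, rfl⟩
      _ ≤ theta v w c τ n a' b x :=
          max_le_max (evacL_anti_i hw hc h1 ha x) le_rfl
  · push_neg at hxa
    calc sInf _ ≤ theta v w c τ n a b (v a) :=
          csInf_le (opt1_bddBelow a b) ⟨v a, ⟨le_rfl, hvab⟩, rfl⟩
      _ ≤ theta v w c τ n a' b x := by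
          apply max_le
          · rw [evacL_self hv (le_trans h1 ha) (le_trans hab hn)]
            exact theta_nonneg _ _ _
          · exact le_trans (evacR_anti_x hτ.le b hxa.le) (le_max_right _ _)

private lemma strictMonoOn_id_le {t : ℕ → ℕ} {P : ℕ}
    (h : StrictMonoOn t (Set.Icc 0 P)) (h0 : t 0 = 0) :
    ∀ q, q ≤ P → q ≤ t q := by
  intro q
  induction q with
  | zero => intro _; omega
  | succ k ih =>
    intro hk
    have hk' : k ≤ P := by omega
    have hlt : t k < t (k + 1) :=
      h ⟨Nat.zero_le _, hk'⟩ ⟨Nat.zero_le _, hk⟩ (Nat.lt_succ_self k)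
    have := ih hk'
    omega

private lemma optk_mono (hv : StrictMonoOn v (Set.Icc 1 n))
    (hw : ∀ h, 1 ≤ h → h ≤ n → 0 < w h) (hc : 0 < c) (hτ : 0 < τ)
    {P t₁ t₂ : ℕ} (hP : 1 ≤ P) (h1 : 1 ≤ t₁) (ht : t₁ ≤ t₂) (hn : t₂ ≤ n) :
    OPTk v w c τ n P 1 t₁ ≤ OPTk v w c τ n P 1 t₂ := by
  unfold OPTk
  by_cases hP1 : P = 1
  · simp only [if_pos hP1]
    subst hP1
    exact opt1_mono_right hv hw hc hτ le_rfl h1 ht hn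
  · simp only [if_neg hP1]
    have hkey : ∀ j : ℕ, j < P →
        {m : ℝ | ∃ t : ℕ → ℕ, t 0 = 1 - 1 ∧ t P = j ∧ StrictMonoOn t (Set.Icc 0 P) ∧
          m = (Finset.Icc 1 P).fold max 0
            (fun q => OPT1 v w c τ n (t (q - 1) + 1) (t q))} = ∅ := by
      intro j hj
      apply Set.eq_empty_iff_forall_notMem.2
      rintro m ⟨t, h0, hPj, hsm, -⟩
      have h0' : t 0 = 0 := by omega
      have := strictMonoOn_id_le hsm h0' P le_rfl
      omega
    by_cases hc2 : t₂ < P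
    · rw [hkey t₁ (lt_of_le_of_lt ht hc2), hkey t₂ hc2]
    · push_neg at hc2
      by_cases hc1 : t₁ < P
      · rw [hkey t₁ hc1, Real.sInf_empty]
        apply Real.sInf_nonneg
        rintro m ⟨t, -, -, -, rfl⟩
        exact fold_max_nonneg _ _
      · push_neg at hc1
        -- both t₁ and t₂ are at least P
        have hbdd : BddBelow {m : ℝ | ∃ t : ℕ → ℕ, t 0 = 1 - 1 ∧ t P = t₁ ∧
            StrictMonoOn t (Set.Icc 0 P) ∧
            m = (Finset.Icc 1 P).fold max 0
              (fun q => OPT1 v w c τ n (t (q - 1) + 1) (t q))} := by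
          refine ⟨0, ?_⟩
          rintro m ⟨t, -, -, -, rfl⟩
          exact fold_max_nonneg _ _
        have hne : Set.Nonempty {m : ℝ | ∃ t : ℕ → ℕ, t 0 = 1 - 1 ∧ t P = t₂ ∧
            StrictMonoOn t (Set.Icc 0 P) ∧
            m = (Finset.Icc 1 P).fold max 0
              (fun q => OPT1 v w c τ n (t (q - 1) + 1) (t q))} := by
          refine ⟨_, ⟨fun q => if q < P then q else t₂, ?_, ?_, ?_, rfl⟩⟩
          · simp only [if_pos (by omega : 0 < P)]
          · simp only [if_neg (lt_irrefl P)]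
          · intro a ha b hb hab
            simp only [Set.mem_Icc] at ha hb
            dsimp only
            split_ifs <;> omega
        apply le_csInf hne
        rintro m ⟨t, h0, hPt, hsm, rfl⟩
        have h0' : t 0 = 0 := by omega
        set t' : ℕ → ℕ := fun q => min (t q) (t₁ - P + q) with ht'def
        have hsm' : StrictMonoOn t' (Set.Icc 0 P) := by
          intro a ha b hb hab
          have := hsm ha hb hab
          simp only [ht'def]
          omega
        have htmono : ∀ q, q ≤ P → t q ≤ t₂ := by
          intro q hq
          rcases eq_or_lt_of_le hq with h | h
          · subst h; omega
          · have := hsm ⟨Nat.zero_le _, hq⟩ ⟨Nat.zero_le _, le_rfl⟩ h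
            omega
        calc sInf _ ≤ (Finset.Icc 1 P).fold max 0
              (fun q => OPT1 v w c τ n (t' (q - 1) + 1) (t' q)) := by
              apply csInf_le hbdd
              refine ⟨t', by simp only [ht'def]; omega, by simp only [ht'def]; omega, hsm', rfl⟩
          _ ≤ (Finset.Icc 1 P).fold max 0
              (fun q => OPT1 v w c τ n (t (q - 1) + 1) (t q)) := by
              rw [Finset.fold_max_le]
              refine ⟨fold_max_nonneg _ _, fun q hq => ?_⟩
              simp only [Finset.mem_Icc] at hq
              have hq1 : q - 1 < q := by omega
              have hmem1 : q - 1 ∈ Set.Icc 0 P := ⟨Nat.zero_le _, by omega⟩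
              have hmem2 : q ∈ Set.Icc 0 P := ⟨Nat.zero_le _, hq.2⟩
              have hlt : t (q - 1) < t q := hsm hmem1 hmem2 hq1
              have hlt' : t' (q - 1) < t' q := hsm' hmem1 hmem2 hq1
              have htqn : t q ≤ n := le_trans (htmono q hq.2) hn
              by_cases hcase : t₁ - P + (q - 1) < t (q - 1)
              · -- degenerate singleton piece
                have e1 : t' (q - 1) + 1 = t' q := by
                  simp only [ht'def]; omega
                have h1q : 1 ≤ t' q := by omega
                have hqn : t' q ≤ n := by
                  have : t' q ≤ t q := min_le_left _ _
                  omega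
                rw [e1, opt1_self hv h1q hqn]
                exact fold_max_nonneg _ _
              · push_neg at hcase
                have e : t' (q - 1) = t (q - 1) := by
                  simp only [ht'def]; omega
                have h1' : 1 ≤ t (q - 1) + 1 := by omega
                have h2' : t (q - 1) + 1 ≤ t' q := by omega
                have h3' : t' q ≤ t q := min_le_left _ _
                calc OPT1 v w c τ n (t' (q - 1) + 1) (t' q)
                    = OPT1 v w c τ n (t (q - 1) + 1) (t' q) := by rw [e]
                  _ ≤ OPT1 v w c τ n (t (q - 1) + 1) (t q) :=
                      opt1_mono_right hv hw hc hτ h1' h2' h3' htqn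
                  _ ≤ _ := (Finset.le_fold_max _).2
                      (Or.inr ⟨q, Finset.mem_Icc.2 hq, le_rfl⟩)

end Aux

/-- Claim 3: f_(p,i)(t) = max (OPT(p-1,1,t)) (OPT(1,t+1,i)) is
unimodal (quasiconvex) in t on 1 ≤ t ≤ i-1. -/
theorem stmt7 (n : ℕ) (v w : ℕ → ℝ) (c τ : ℝ) (p i : ℕ)
    (hp : 2 ≤ p) (hpi : p ≤ i) (hin : i ≤ n)
    (hv1 : v 1 = 0) (hv : StrictMonoOn v (Set.Icc 1 n))
    (hw : ∀ h, 1 ≤ h → h ≤ n → 0 < w h) (hc : 0 < c) (hτ : 0 < τ) :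
    ∀ t₁ t₂ t₃ : ℕ, 1 ≤ t₁ → t₁ ≤ t₂ → t₂ ≤ t₃ → t₃ ≤ i - 1 →
      max (OPTk v w c τ n (p - 1) 1 t₂) (OPT1 v w c τ n (t₂ + 1) i) ≤
        max (max (OPTk v w c τ n (p - 1) 1 t₁) (OPT1 v w c τ n (t₁ + 1) i))
            (max (OPTk v w c τ n (p - 1) 1 t₃) (OPT1 v w c τ n (t₃ + 1) i)) := by
  intro t₁ t₂ t₃ h1 h12 h23 h3
  have hi2 : 2 ≤ i := le_trans hp hpi
  have hA : OPTk v w c τ n (p - 1) 1 t₂ ≤ OPTk v w c τ n (p - 1) 1 t₃ :=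
    optk_mono hv hw hc hτ (by omega) (by omega) h23 (by omega)
  have hB : OPT1 v w c τ n (t₂ + 1) i ≤ OPT1 v w c τ n (t₁ + 1) i :=
    opt1_anti_left hv hw hc hτ (by omega) (by omega) (by omega) hin
  exact max_le (le_trans hA (le_trans (le_max_left _ _) (le_max_right _ _)))
               (le_trans hB (le_trans (le_max_right _ _) (le_max_left _ _)))
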